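/- arXiv:1911.01800 — 2 statements merged into one kernel-verified Lean document; each statement's English description precedes it below -/
import Mathlib

section
/- Let q be a nonzero Gaussian integer and n a Gaussian integer. The number of residues x modulo 2q in Z[i] satisfying x^2 ≡ n^2 - 4 (mod 4q) equals the number of residues y modulo q satisfying y^2 + y·n + 1 ≡ 0 (mod q). -/
open Ideal

private lemma zmod4_key (a b c d : ZMod 4) (h1 : a^2 - b^2 + 2*(a*c - b*d) = 0)
    (h2 : 2*(a*b + a*d + b*c) = 0) : 2*a = 0 ∧ 2*b = 0 := by
  revert h1 h2; revert a b c d; decide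

private lemma int_key (a b c d : ℤ) (h1 : (4:ℤ) ∣ a^2 - b^2 + 2*(a*c - b*d))
    (h2 : (4:ℤ) ∣ 2*(a*b + a*d + b*c)) : 2 ∣ a ∧ 2 ∣ b := by
  have h1' : ((a^2 - b^2 + 2*(a*c - b*d) : ℤ) : ZMod 4) = 0 :=
    (ZMod.intCast_zmod_eq_zero_iff_dvd _ 4).2 (by exact_mod_cast h1)
  have h2' : ((2*(a*b + a*d + b*c) : ℤ) : ZMod 4) = 0 :=
    (ZMod.intCast_zmod_eq_zero_iff_dvd _ 4).2 (by exact_mod_cast h2)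
  push_cast at h1' h2'
  have hk := zmod4_key a b c d h1' h2'
  constructor
  · have ha : ((2*a : ℤ) : ZMod 4) = 0 := by push_cast; exact hk.1
    have := (ZMod.intCast_zmod_eq_zero_iff_dvd _ 4).1 ha
    omega
  · have hb : ((2*b : ℤ) : ZMod 4) = 0 := by push_cast; exact hk.2
    have := (ZMod.intCast_zmod_eq_zero_iff_dvd _ 4).1 hb
    omega

private lemma gauss_key (z n : GaussianInt) (h : (4:GaussianInt) ∣ z^2 + 2*z*n) :
    2 ∣ z := by
  rw [show (4:GaussianInt) = ((4:ℤ) : GaussianInt) by norm_num, Zsqrtd.intCast_dvd] at h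
  rw [show (2:GaussianInt) = ((2:ℤ) : GaussianInt) by norm_num, Zsqrtd.intCast_dvd]
  obtain ⟨hre, him⟩ := h
  simp [Zsqrtd.re_mul, Zsqrtd.im_mul, pow_two] at hre him
  exact int_key z.re z.im n.re n.im (by convert hre using 1; ring)
    (by convert him using 1; ring)

/-- The number of residues `x` mod `2q` with `x² ≡ n² - 4 (mod 4q)` equals the number of
residues `y` mod `q` with `y² + y·n + 1 ≡ 0 (mod q)`, in the Gaussian integers. -/
theorem stmt0 (q n : GaussianInt) (hq : q ≠ 0) :
    Nat.card {x : GaussianInt ⧸ Ideal.span {2 * q} //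
        ∃ x₀ : GaussianInt, Ideal.Quotient.mk (Ideal.span {2 * q}) x₀ = x ∧
          (4 * q) ∣ x₀ ^ 2 - (n ^ 2 - 4)} =
    Nat.card {y : GaussianInt ⧸ Ideal.span {q} //
        ∃ y₀ : GaussianInt, Ideal.Quotient.mk (Ideal.span {q}) y₀ = y ∧
          q ∣ y₀ ^ 2 + y₀ * n + 1} := by
  have h4 : (4 : GaussianInt) ≠ 0 := by norm_num
  set X := {x : GaussianInt ⧸ Ideal.span {2 * q} //
        ∃ x₀ : GaussianInt, Ideal.Quotient.mk (Ideal.span {2 * q}) x₀ = x ∧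
          (4 * q) ∣ x₀ ^ 2 - (n ^ 2 - 4)} with hX
  set Y := {y : GaussianInt ⧸ Ideal.span {q} //
        ∃ y₀ : GaussianInt, Ideal.Quotient.mk (Ideal.span {q}) y₀ = y ∧
          q ∣ y₀ ^ 2 + y₀ * n + 1} with hY
  -- the map y ↦ 2y + n
  have fdvd : ∀ y₀ : GaussianInt, q ∣ y₀ ^ 2 + y₀ * n + 1 →
      (4 * q) ∣ (2 * y₀ + n) ^ 2 - (n ^ 2 - 4) := by
    intro y₀ hy
    have : (2 * y₀ + n) ^ 2 - (n ^ 2 - 4) = 4 * (y₀ ^ 2 + y₀ * n + 1) := by ring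
    rw [this]
    exact mul_dvd_mul_left 4 hy
  let f : Y → X := fun a => ⟨Ideal.Quotient.mk (Ideal.span {2 * q}) (2 * a.2.choose + n),
    2 * a.2.choose + n, rfl, fdvd _ a.2.choose_spec.2⟩
  have hinj : Function.Injective f := by
    intro a b hab
    have h1 := a.2.choose_spec.1
    have h2 := b.2.choose_spec.1
    have : Ideal.Quotient.mk (Ideal.span {2 * q}) (2 * a.2.choose + n) =
        Ideal.Quotient.mk (Ideal.span {2 * q}) (2 * b.2.choose + n) :=
      congrArg Subtype.val hab
    rw [Ideal.Quotient.eq, Ideal.mem_span_singleton] at this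
    have hd : q ∣ a.2.choose - b.2.choose := by
      obtain ⟨t, ht⟩ := this
      refine ⟨t, ?_⟩
      have h2' : (2 : GaussianInt) ≠ 0 := by norm_num
      apply mul_left_cancel₀ h2'
      calc 2 * (a.2.choose - b.2.choose) = 2 * a.2.choose + n - (2 * b.2.choose + n) := by ring
        _ = 2 * q * t := ht
        _ = 2 * (q * t) := by ring
    apply Subtype.ext
    rw [← h1, ← h2, Ideal.Quotient.eq, Ideal.mem_span_singleton]
    exact hd
  have hsurj : Function.Surjective f := by
    rintro ⟨x, x₀, hx, hdvd⟩
    -- 4 ∣ x₀² - (n² - 4)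
    have h4d : (4 : GaussianInt) ∣ (x₀ - n) ^ 2 + 2 * (x₀ - n) * n := by
      have : (x₀ - n) ^ 2 + 2 * (x₀ - n) * n = (x₀ ^ 2 - (n ^ 2 - 4)) - 4 := by ring
      rw [this]
      exact dvd_sub (dvd_trans ⟨q, rfl⟩ hdvd) dvd_rfl
    obtain ⟨y₀, hy₀⟩ := gauss_key (x₀ - n) n h4d
    have hx₀ : x₀ = 2 * y₀ + n := by
      have := hy₀; linear_combination this
    have hqd : q ∣ y₀ ^ 2 + y₀ * n + 1 := by
      have : (4 : GaussianInt) * (y₀ ^ 2 + y₀ * n + 1) = x₀ ^ 2 - (n ^ 2 - 4) := by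
        rw [hx₀]; ring
      have h' : 4 * q ∣ 4 * (y₀ ^ 2 + y₀ * n + 1) := this ▸ hdvd
      exact (mul_dvd_mul_iff_left h4).1 (by rw [mul_comm 4 q] at h'; rwa [mul_comm] )
    refine ⟨⟨Ideal.Quotient.mk (Ideal.span {q}) y₀, y₀, rfl, hqd⟩, ?_⟩
    apply Subtype.ext
    show Ideal.Quotient.mk (Ideal.span {2 * q}) (2 * _ + n) = x
    set b : Y := ⟨Ideal.Quotient.mk (Ideal.span {q}) y₀, y₀, rfl, hqd⟩ with hb
    have hbs := b.2.choose_spec.1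
    have hqd2 : q ∣ b.2.choose - y₀ := by
      rw [← Ideal.mem_span_singleton, ← Ideal.Quotient.eq]
      exact hbs
    have : Ideal.Quotient.mk (Ideal.span {2 * q}) (2 * b.2.choose + n) =
        Ideal.Quotient.mk (Ideal.span {2 * q}) x₀ := by
      rw [Ideal.Quotient.eq, Ideal.mem_span_singleton, hx₀]
      obtain ⟨t, ht⟩ := hqd2
      exact ⟨t, by rw [show 2 * b.2.choose + n - (2 * y₀ + n) = 2 * (b.2.choose - y₀) by ring, ht]; ring⟩
    rw [this, hx]
  exact (Nat.card_congr (Equiv.ofBijective f ⟨hinj, hsurj⟩)).symm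
end

section
/- Let q be a nonzero Gaussian integer and define ρ_q(δ) as the number of residues x mod 2q with x^2 ≡ δ (mod 4q). Then the sum of ρ_q(b^2 - 4) over a complete set of residues b modulo q equals φ(q), the number of units in Z[i]/(q). -/
set_option maxHeartbeats 1000000
set_option synthInstance.maxHeartbeats 200000

/-- `ρ_q(δ)`: the number of residues `x` mod `2q` in `ℤ[i]` with `x² ≡ δ (mod 4q)`. -/
noncomputable def rhoGauss (q δ : GaussianInt) : ℕ :=
  Nat.card {x : GaussianInt ⧸ Ideal.span {2 * q} //
    ∃ x₀ : GaussianInt, Ideal.Quotient.mk (Ideal.span {2 * q}) x₀ = x ∧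
      (4 * q) ∣ x₀ ^ 2 - δ}

lemma int_parity (a b c e : ℤ) (h1 : 4 ∣ a*c - b*e) (h2 : 4 ∣ a*e + b*c)
    (h3 : 2 ∣ a - c) (h4 : 2 ∣ b - e) : 2 ∣ a ∧ 2 ∣ b := by
  have cast2 : ∀ n : ℤ, 2 ∣ n ↔ ((n : ZMod 4) = 0 ∨ (n : ZMod 4) = 2) := by
    intro n
    constructor
    · rintro ⟨m, rfl⟩
      push_cast
      exact (by decide : ∀ x : ZMod 4, 2*x = 0 ∨ 2*x = 2) _
    · rintro (hx | hx)
      · have := (ZMod.intCast_zmod_eq_zero_iff_dvd n 4).mp hx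
        omega
      · have : ((n - 2 : ℤ) : ZMod 4) = 0 := by push_cast [hx]; ring
        have := (ZMod.intCast_zmod_eq_zero_iff_dvd _ 4).mp this
        omega
  have cast4 : ∀ n : ℤ, 4 ∣ n ↔ ((n : ZMod 4) = 0) := by
    intro n
    rw [ZMod.intCast_zmod_eq_zero_iff_dvd]
    norm_num
  have key : ∀ a b c e : ZMod 4, (a - c = 0 ∨ a - c = 2) → (b - e = 0 ∨ b - e = 2) →
      a*c - b*e = 0 → a*e + b*c = 0 →
      ((a = 0 ∨ a = 2) ∧ (b = 0 ∨ b = 2)) := by decide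
  have := key a b c e (by rw [cast2] at h3; push_cast at h3 ⊢; exact h3)
    (by rw [cast2] at h4; push_cast at h4 ⊢; exact h4)
    (by rw [cast4] at h1; push_cast at h1 ⊢; exact h1)
    (by rw [cast4] at h2; push_cast at h2 ⊢; exact h2)
  rw [cast2, cast2 b]
  exact this

lemma gauss_two_dvd (s d : GaussianInt) (h4 : 4 ∣ s * d) (h2 : 2 ∣ s - d) : 2 ∣ s := by
  have c4 : (4 : GaussianInt) = ((4:ℤ) : ℤ√(-1)) := by norm_cast
  have c2 : (2 : GaussianInt) = ((2:ℤ) : ℤ√(-1)) := by norm_cast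
  rw [c4, Zsqrtd.intCast_dvd] at h4
  rw [c2, Zsqrtd.intCast_dvd] at h2
  rw [c2, Zsqrtd.intCast_dvd]
  simp only [Zsqrtd.re_mul, Zsqrtd.im_mul, Zsqrtd.re_sub, Zsqrtd.im_sub] at h4 h2 ⊢
  obtain ⟨hre, him⟩ := h4
  have hre' : (4:ℤ) ∣ s.re * d.re - s.im * d.im := by
    rw [(by ring : s.re * d.re - s.im * d.im = s.re * d.re + -1 * s.im * d.im)]
    exact hre
  exact int_parity s.re s.im d.re d.im hre' him h2.1 h2.2

noncomputable def gaussAddEquiv : GaussianInt ≃+ ℤ × ℤ where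
  toFun z := (z.re, z.im)
  invFun p := ⟨p.1, p.2⟩
  left_inv _ := rfl
  right_inv _ := rfl
  map_add' _ _ := rfl

instance : Module.Free ℤ GaussianInt :=
  Module.Free.of_equiv gaussAddEquiv.symm.toIntLinearEquiv

instance : Module.Finite ℤ GaussianInt :=
  Module.Finite.equiv gaussAddEquiv.symm.toIntLinearEquiv

lemma finquot (a : GaussianInt) (ha : a ≠ 0) : Finite (GaussianInt ⧸ Ideal.span {a}) := by
  have : Ideal.span {a} ≠ ⊥ := by simpa [Ideal.span_singleton_eq_bot] using ha
  exact Ideal.finiteQuotientOfFreeOfNeBot _ this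

abbrev Fib (q b : GaussianInt) : Type := {x : GaussianInt ⧸ Ideal.span {2 * q} //
    ∃ x₀ : GaussianInt, Ideal.Quotient.mk (Ideal.span {2 * q}) x₀ = x ∧
      (4 * q) ∣ x₀ ^ 2 - (b ^ 2 - 4)}

lemma sigma_ext {q : GaussianInt} {B : Finset GaussianInt} {s t : Σ b : ↥B, Fib q ↑b}
    (h1 : s.1 = t.1) (h2 : s.2.1 = t.2.1) : s = t := by
  obtain ⟨b, x⟩ := s; obtain ⟨c, y⟩ := t
  cases h1; cases Subtype.ext h2; rfl

/-- For any complete set of residues `B` modulo `q` in `ℤ[i]`, the sum of `ρ_q(b² - 4)`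
over `b ∈ B` equals the number of units of `ℤ[i]/(q)`. -/
theorem stmt2 (q : GaussianInt) (hq : q ≠ 0) (B : Finset GaussianInt)
    (hB : Set.BijOn (Ideal.Quotient.mk (Ideal.span {q})) B Set.univ) :
    ∑ b ∈ B, rhoGauss q (b ^ 2 - 4) =
      Nat.card (GaussianInt ⧸ Ideal.span {q})ˣ := by
  classical
  haveI := finquot q hq
  haveI := finquot (2*q) (mul_ne_zero two_ne_zero hq)
  set mkq := Ideal.Quotient.mk (Ideal.span {q}) with hmkq
  set mk2 := Ideal.Quotient.mk (Ideal.span {2*q}) with hmk2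
  have hdq : ∀ z : GaussianInt, mkq z = 0 ↔ q ∣ z := by
    intro z
    rw [hmkq, Ideal.Quotient.eq_zero_iff_mem, Ideal.mem_span_singleton]
  have hdq' : ∀ z w : GaussianInt, mkq z = mkq w ↔ q ∣ z - w := by
    intro z w
    rw [hmkq, Ideal.Quotient.eq, Ideal.mem_span_singleton]
  have hd2 : ∀ z w : GaussianInt, mk2 z = mk2 w ↔ 2*q ∣ z - w := by
    intro z w
    rw [hmk2, Ideal.Quotient.eq, Ideal.mem_span_singleton]
  have hpick : ∀ t : GaussianInt ⧸ Ideal.span {q}, ∃ b, b ∈ B ∧ mkq b = t := by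
    intro t
    obtain ⟨b, hb, h⟩ := hB.surjOn (Set.mem_univ t)
    exact ⟨b, hb, h⟩
  choose pick pick_mem pick_spec using hpick
  choose lift lift_spec using Ideal.Quotient.mk_surjective (I := Ideal.span {q})
  have key : ∀ u : (GaussianInt ⧸ Ideal.span {q})ˣ,
      4 * q ∣ (2 * lift ↑u - pick (↑u + ↑u⁻¹)) ^ 2 - ((pick (↑u + ↑u⁻¹)) ^ 2 - 4) := by
    intro u
    set b := pick (↑u + ↑u⁻¹) with hbdef
    set w := lift (↑u) with hwdef
    have hq1 : q ∣ w * w - w * b + 1 := by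
      rw [← hdq]
      have hw : mkq w = ↑u := lift_spec _
      have hb : mkq b = ↑u + ↑u⁻¹ := pick_spec _
      have huv : (↑u : GaussianInt ⧸ Ideal.span {q}) * ↑u⁻¹ = 1 := u.mul_inv
      simp only [map_add, map_mul, map_sub, map_one, hw, hb]
      linear_combination -huv
    obtain ⟨c, hc⟩ := hq1
    exact ⟨c, by linear_combination 4*hc⟩
  let ψ : (GaussianInt ⧸ Ideal.span {q})ˣ → Σ b : ↥B, Fib q ↑b := fun u =>
    ⟨⟨pick (↑u + ↑u⁻¹), pick_mem _⟩,
     ⟨mk2 (2 * lift ↑u - pick (↑u + ↑u⁻¹)),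
      2 * lift ↑u - pick (↑u + ↑u⁻¹), rfl, key u⟩⟩
  have hinj : Function.Injective ψ := by
    intro u v h
    have h1 : pick (↑u + ↑u⁻¹) = pick (↑v + ↑v⁻¹) :=
      congrArg (fun s => (s.1 : GaussianInt)) h
    have h2 : mk2 (2 * lift ↑u - pick (↑u + ↑u⁻¹))
        = mk2 (2 * lift ↑v - pick (↑v + ↑v⁻¹)) :=
      congrArg (fun s : Σ b : ↥B, Fib q ↑b => (s.2 : GaussianInt ⧸ Ideal.span {2*q})) h
    rw [← h1, hd2] at h2
    obtain ⟨c, hc⟩ := h2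
    have h3 : q ∣ lift ↑u - lift ↑v := ⟨c, by
      apply mul_left_cancel₀ (by norm_num : (2:GaussianInt) ≠ 0)
      linear_combination hc⟩
    have h4 : (↑u : GaussianInt ⧸ Ideal.span {q}) = ↑v := by
      rw [← lift_spec ↑u, ← lift_spec ↑v, hdq']
      exact h3
    exact Units.ext h4
  have hsurj : Function.Surjective ψ := by
    rintro ⟨⟨b, hb⟩, x, x₀, hx₀, hdvd⟩
    have h4 : (4:GaussianInt) ∣ (x₀ + b) * (x₀ - b) := by
      obtain ⟨c, hc⟩ := hdvd
      exact ⟨q*c - 1, by linear_combination hc⟩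
    have h2 : (2:GaussianInt) ∣ (x₀ + b) - (x₀ - b) := ⟨b, by ring⟩
    obtain ⟨u₀, hu₀⟩ := gauss_two_dvd _ _ h4 h2
    have hq1 : q ∣ 1 - u₀ * (b - u₀) := by
      obtain ⟨c, hc⟩ := hdvd
      refine ⟨c, mul_left_cancel₀ (by norm_num : (4:GaussianInt) ≠ 0) ?_⟩
      linear_combination hc - (x₀ - b + 2*u₀) * hu₀
    have hmul : mkq u₀ * mkq (b - u₀) = 1 := by
      rw [← map_mul, ← map_one mkq, hdq']
      obtain ⟨c, hc⟩ := hq1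
      exact ⟨-c, by linear_combination -hc⟩
    set u : (GaussianInt ⧸ Ideal.span {q})ˣ := Units.mkOfMulEqOne _ _ hmul with hu
    refine ⟨u, ?_⟩
    have huval : (u : GaussianInt ⧸ Ideal.span {q}) = mkq u₀ := rfl
    have huinv : ((u⁻¹ : (GaussianInt ⧸ Ideal.span {q})ˣ) :
        GaussianInt ⧸ Ideal.span {q}) = mkq (b - u₀) := rfl
    have ht : (↑u + ↑u⁻¹ : GaussianInt ⧸ Ideal.span {q}) = mkq b := by
      rw [huval, huinv, ← map_add]
      ring_nf
    have hpb : pick (↑u + ↑u⁻¹) = b := by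
      apply hB.injOn (pick_mem _) hb
      rw [pick_spec, ht]
    apply sigma_ext
    · exact Subtype.ext hpb
    · show mk2 (2 * lift _ - pick _) = x
      rw [hpb, ← hx₀, hd2]
      have : q ∣ lift (↑u) - u₀ := by
        rw [← hdq']
        rw [lift_spec, huval]
      obtain ⟨c, hc⟩ := this
      exact ⟨c, by linear_combination 2*hc - hu₀⟩
  have hcard : Nat.card (Σ b : ↥B, Fib q ↑b) = Nat.card (GaussianInt ⧸ Ideal.span {q})ˣ :=
    (Nat.card_eq_of_bijective ψ ⟨hinj, hsurj⟩).symm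
  rw [← hcard]
  haveI : ∀ b : ↥B, Fintype (Fib q ↑b) := fun b => Fintype.ofFinite _
  rw [Nat.card_eq_fintype_card, Fintype.card_sigma,
    ← Finset.sum_coe_sort B (fun b => rhoGauss q (b^2-4))]
  apply Finset.sum_congr rfl
  intro b _
  show rhoGauss q ((b:GaussianInt)^2 - 4) = Fintype.card (Fib q ↑b)
  rw [show rhoGauss q ((b:GaussianInt)^2-4) = Nat.card (Fib q ↑b) from rfl,
    Nat.card_eq_fintype_card]
end
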